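/- The Artin–Brieskorn braid group of type D_n admits a presentation with three generators σ₁, σ, ρ and relations: σ₁σⁱσ₁σ⁻ⁱ = σⁱσ₁σ⁻ⁱσ₁ for 2 ≤ i ≤ n/2; σⁿ = (σσ₁)ⁿ⁻¹; ρσⁱσ₁σ⁻ⁱ = σⁱσ₁σ⁻ⁱρ for i = 0 and 2 ≤ i ≤ n−2; ρσσ₁σ⁻¹ρ = σσ₁σ⁻¹ρσσ₁σ⁻¹. That is, this presented group is isomorphic to the standard Artin group of type D_n via σ ↦ σ₁σ₂⋯σ_{n-1}. -/
import Mathlib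


namespace TypeD

open FreeGroup in
/-- Relators of the standard Artin presentation of type `D_n`: `Sum.inl i` is `σ_{i+1}`
(`i : Fin (n-1)`), `Sum.inr ()` is `ρ`.  `ρ` commutes with every `σᵢ` except `σ₂`,
and `ρσ₂ρ = σ₂ρσ₂`. -/
inductive IsDRel (n : ℕ) : FreeGroup (Fin (n - 1) ⊕ Unit) → Prop
  | comm_ss (i j : Fin (n - 1)) (h : (i : ℕ) + 1 < j) :
      IsDRel n (of (.inl i) * of (.inl j) * (of (.inl j) * of (.inl i))⁻¹)
  | braid_s (i : ℕ) (h : i + 1 < n - 1) :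
      IsDRel n (of (.inl ⟨i, by omega⟩) * of (.inl ⟨i + 1, h⟩) * of (.inl ⟨i, by omega⟩) *
        (of (.inl ⟨i + 1, h⟩) * of (.inl ⟨i, by omega⟩) * of (.inl ⟨i + 1, h⟩))⁻¹)
  | comm_rho (i : Fin (n - 1)) (h : (i : ℕ) ≠ 1) :
      IsDRel n (of (.inr ()) * of (.inl i) * (of (.inl i) * of (.inr ()))⁻¹)
  | braid_rho (h : 1 < n - 1) :
      IsDRel n (of (.inr ()) * of (.inl ⟨1, h⟩) * of (.inr ()) *
        (of (.inl ⟨1, h⟩) * of (.inr ()) * of (.inl ⟨1, h⟩))⁻¹)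

open FreeGroup in
/-- Relators of the three-generator presentation of the Artin group of type `D_n`:
generator `0` is `σ₁`, generator `1` is `σ`, generator `2` is `ρ`. -/
inductive IsDThreeRel (n : ℕ) : FreeGroup (Fin 3) → Prop
  | r₁ (i : ℕ) (h₁ : 2 ≤ i) (h₂ : i ≤ n / 2) :
      IsDThreeRel n (of 0 * of 1 ^ i * of 0 * (of 1 ^ i)⁻¹ *
        (of 1 ^ i * of 0 * (of 1 ^ i)⁻¹ * of 0)⁻¹)
  | r₂ : IsDThreeRel n (of 1 ^ n * ((of 1 * of 0) ^ (n - 1))⁻¹)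
  | r₃ (i : ℕ) (h : i = 0 ∨ (2 ≤ i ∧ i ≤ n - 2)) :
      IsDThreeRel n (of 2 * (of 1 ^ i * of 0 * (of 1 ^ i)⁻¹) *
        (of 1 ^ i * of 0 * (of 1 ^ i)⁻¹ * of 2)⁻¹)
  | r₄ : IsDThreeRel n (of 2 * (of 1 * of 0 * (of 1)⁻¹) * of 2 *
      (of 1 * of 0 * (of 1)⁻¹ * of 2 * (of 1 * of 0 * (of 1)⁻¹))⁻¹)


variable {G : Type*} {H : Type*} [Group G] [Group H]

/-- product `s a * s (a+1) * ... * s (a+k-1)`. -/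
def chainProd (s : ℕ → G) : ℕ → ℕ → G
  | _, 0 => 1
  | a, k+1 => s a * chainProd s (a+1) k

@[simp] lemma chainProd_zero (s : ℕ → G) (a : ℕ) : chainProd s a 0 = 1 := rfl

lemma chainProd_succ (s : ℕ → G) (a k : ℕ) :
    chainProd s a (k+1) = s a * chainProd s (a+1) k := rfl

lemma chainProd_succ' (s : ℕ → G) (a k : ℕ) :
    chainProd s a (k+1) = chainProd s a k * s (a+k) := by
  induction k generalizing a with
  | zero => simp [chainProd_succ]
  | succ k ih =>
      rw [chainProd_succ, ih (a+1), chainProd_succ, mul_assoc]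
      have : a + 1 + k = a + (k+1) := by omega
      rw [this]

lemma chainProd_add (s : ℕ → G) (a k l : ℕ) :
    chainProd s a (k + l) = chainProd s a k * chainProd s (a+k) l := by
  induction l with
  | zero => simp
  | succ l ih =>
      have : k + (l + 1) = (k + l) + 1 := rfl
      rw [this, chainProd_succ', ih, chainProd_succ', mul_assoc]
      have : a + k + l = a + (k + l) := by omega
      rw [this]

lemma chainProd_congr {s s' : ℕ → G} {a k : ℕ}
    (h : ∀ j, a ≤ j → j < a + k → s j = s' j) :
    chainProd s a k = chainProd s' a k := by
  induction k generalizing a with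
  | zero => rfl
  | succ k ih =>
      rw [chainProd_succ, chainProd_succ, h a (le_refl a) (by omega),
        ih fun j h1 h2 => h j (by omega) (by omega)]

lemma map_chainProd (f : G →* H) (s : ℕ → G) (a k : ℕ) :
    f (chainProd s a k) = chainProd (fun i => f (s i)) a k := by
  induction k generalizing a with
  | zero => simp
  | succ k ih => rw [chainProd_succ, map_mul, ih, chainProd_succ]

lemma commute_chainProd {x : G} {s : ℕ → G} {a k : ℕ}
    (h : ∀ j, a ≤ j → j < a + k → x * s j = s j * x) :
    x * chainProd s a k = chainProd s a k * x := by
  induction k generalizing a with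
  | zero => simp
  | succ k ih =>
      rw [chainProd_succ, ← mul_assoc, h a (le_refl a) (by omega), mul_assoc,
        ih fun j h1 h2 => h j (by omega) (by omega), mul_assoc]

lemma chainProd_eq_ofFn (s : ℕ → G) (a k : ℕ) (g : Fin k → G)
    (h : ∀ j : Fin k, s (a + j) = g j) :
    chainProd s a k = (List.ofFn g).prod := by
  induction k generalizing a with
  | zero => simp
  | succ k ih =>
      rw [List.ofFn_succ, List.prod_cons, chainProd_succ, ← h 0]
      simp only [Fin.val_zero, Nat.add_zero]
      rw [ih (a+1) (fun j => g j.succ) (fun j => by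
        have := h j.succ
        simpa [Nat.add_assoc, Nat.add_comm 1 (j:ℕ)] using this)]

/-- tail versions of equations, for right-associated rewriting -/
lemma tail2 {a b c d : G} (h : a * b = c * d) : ∀ x : G, a * (b * x) = c * (d * x) :=
  fun x => by rw [← mul_assoc, h, mul_assoc]

lemma tail3 {a b c d e f : G} (h : a * b * c = d * e * f) :
    ∀ x : G, a * (b * (c * x)) = d * (e * (f * x)) :=
  fun x => by rw [← mul_assoc, ← mul_assoc, h, mul_assoc, mul_assoc]
section Chain
variable {G : Type*} [Group G]
variable (s : ℕ → G) (m : ℕ)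
variable (hcomm : ∀ i j, i + 2 ≤ j → j ≤ m → s i * s j = s j * s i)
variable (hbraid : ∀ i, i + 1 ≤ m → s i * s (i+1) * s i = s (i+1) * s i * s (i+1))

include hcomm in
lemma chain_comm_left {i a k : ℕ} (h2 : i + 2 ≤ a) (hk : a + k ≤ m + 1) :
    s i * chainProd s a k = chainProd s a k * s i :=
  commute_chainProd fun j hj1 hj2 => hcomm i j (by omega) (by omega)

include hcomm in
lemma chain_comm_right {i a k : ℕ} (h2 : a + k + 1 ≤ i) (him : i ≤ m) :
    s i * chainProd s a k = chainProd s a k * s i :=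
  commute_chainProd fun j hj1 hj2 => (hcomm j i (by omega) him).symm

include hcomm hbraid in
lemma delta_mul_s {i : ℕ} (h : i + 1 ≤ m) :
    chainProd s 0 (m+1) * s i = s (i+1) * chainProd s 0 (m+1) := by
  have hsplit : m + 1 = i + (2 + (m - 1 - i)) := by omega
  have hC : s i * chainProd s (i+2) (m-1-i) = chainProd s (i+2) (m-1-i) * s i :=
    chain_comm_left s m hcomm (by omega) (by omega)
  have hA : s (i+1) * chainProd s 0 i = chainProd s 0 i * s (i+1) :=
    chain_comm_right s m hcomm (by omega) (by omega)
  rw [hsplit, chainProd_add, chainProd_add]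
  simp only [Nat.zero_add, chainProd_succ, chainProd_zero, mul_one]
  simp only [mul_assoc]
  rw [← hC, tail3 (hbraid i h), ← tail2 hA]

include hcomm hbraid in
lemma delta_pow_mul {k : ℕ} (hk : k ≤ m) :
    chainProd s 0 (m+1) ^ k * s 0 = s k * chainProd s 0 (m+1) ^ k := by
  induction k with
  | zero => simp
  | succ k ih =>
      rw [pow_succ', mul_assoc, ih (by omega), ← mul_assoc,
        delta_mul_s s m hcomm hbraid (by omega), mul_assoc, ← pow_succ']

lemma sq_step {G : Type*} [Group G] {x y w z : G} (h1 : x * w = w * x)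
    (h2 : x * y * x = y * x * y)
    (h3 : y * w * (y * w) * z = y * (y * w * (y * w))) :
    x * (y * w) * (x * (y * w)) * z = x * (x * (y * w) * (x * (y * w))) := by
  have h1' := tail2 h1
  have h2' := tail3 h2
  have h3' : w * (y * (w * z)) = y * (w * (y * w)) := by
    have h := h3
    simp only [mul_assoc] at h
    exact mul_left_cancel h
  have e1 : x * (y * w) * (x * (y * w)) * z = x * (y * (x * (y * (w * (y * w))))) := by
    simp only [mul_assoc]
    rw [← h1' (y * (w * z)), h3']
  have e2 : x * (x * (y * w) * (x * (y * w))) = x * (y * (x * (y * (w * (y * w))))) := by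
    simp only [mul_assoc]
    rw [← h1' (y * w), h2' (w * (y * w))]
  exact e1.trans e2.symm

include hcomm hbraid in
lemma chain_sq (d : ℕ) : ∀ a, a + d ≤ m →
    chainProd s a (d+1) * chainProd s a (d+1) * s (a+d)
      = s a * (chainProd s a (d+1) * chainProd s a (d+1)) := by
  induction d with
  | zero => intro a _; simp [chainProd_succ, mul_assoc]
  | succ d ih =>
      intro a ha
      have hW : s a * chainProd s (a+2) d = chainProd s (a+2) d * s a :=
        chain_comm_left s m hcomm (le_refl _) (by omega)
      have hIH := ih (a+1) (by omega)
      have hQ : chainProd s (a+1) (d+1) = s (a+1) * chainProd s (a+2) d := rfl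
      rw [hQ] at hIH
      have hidx : a + 1 + d = a + (d + 1) := by omega
      rw [hidx] at hIH
      exact sq_step hW (hbraid a (by omega)) hIH

include hcomm hbraid in
lemma delta_pow_comm :
    chainProd s 0 (m+1) ^ (m+2) * s 0 = s 0 * chainProd s 0 (m+1) ^ (m+2) := by
  have h2 : (2 : ℕ) + m = m + 2 := by omega
  have hsq := chain_sq s m hcomm hbraid m 0 (by omega)
  simp only [Nat.zero_add] at hsq
  calc chainProd s 0 (m+1) ^ (m+2) * s 0
      = chainProd s 0 (m+1) ^ 2 * (chainProd s 0 (m+1) ^ m * s 0) := by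
        rw [← mul_assoc, ← pow_add, h2]
    _ = chainProd s 0 (m+1) ^ 2 * (s m * chainProd s 0 (m+1) ^ m) := by
        rw [delta_pow_mul s m hcomm hbraid (le_refl m)]
    _ = (chainProd s 0 (m+1) * chainProd s 0 (m+1) * s m) * chainProd s 0 (m+1) ^ m := by
        rw [pow_two]; simp only [mul_assoc]
    _ = (s 0 * (chainProd s 0 (m+1) * chainProd s 0 (m+1))) * chainProd s 0 (m+1) ^ m := by
        rw [hsq]
    _ = s 0 * chainProd s 0 (m+1) ^ (m+2) := by
        rw [← pow_two, mul_assoc, ← pow_add, h2]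

include hcomm hbraid in
lemma delta_s_pow {k : ℕ} (hk : k ≤ m) :
    (chainProd s 0 (m+1) * s 0) ^ k = chainProd s 1 k * chainProd s 0 (m+1) ^ k := by
  induction k with
  | zero => simp
  | succ k ih =>
      have hidx : 1 + k = k + 1 := by omega
      rw [pow_succ, ih (by omega), mul_assoc, ← mul_assoc (chainProd s 0 (m+1) ^ k),
        ← pow_succ, delta_pow_mul s m hcomm hbraid hk, ← mul_assoc,
        ← hidx, ← chainProd_succ', hidx]

include hcomm hbraid in
lemma delta_main :
    (chainProd s 0 (m+1) * s 0) ^ (m+1) = chainProd s 0 (m+1) ^ (m+2) := by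
  have hδ : chainProd s 0 (m+1) = s 0 * chainProd s 1 m := rfl
  have h1 : chainProd s 1 m = (s 0)⁻¹ * chainProd s 0 (m+1) := by
    rw [hδ]; group
  rw [pow_succ, delta_s_pow s m hcomm hbraid (le_refl m), h1]
  calc (s 0)⁻¹ * chainProd s 0 (m+1) * chainProd s 0 (m+1) ^ m *
        (chainProd s 0 (m+1) * s 0)
      = (s 0)⁻¹ * (chainProd s 0 (m+1) ^ (m+2) * s 0) := by group
    _ = (s 0)⁻¹ * (s 0 * chainProd s 0 (m+1) ^ (m+2)) := by
        rw [delta_pow_comm s m hcomm hbraid]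
    _ = chainProd s 0 (m+1) ^ (m+2) := by group

end Chain
section Two
variable {G : Type*} [Group G]

/-- `tconj x0 x1 a = x1^a * x0 * x1^{-a}` -/
def tconj (x0 x1 : G) (a : ℕ) : G := x1 ^ a * x0 * (x1 ^ a)⁻¹

variable (x0 x1 : G) (n : ℕ)

lemma tconj_zero : tconj x0 x1 0 = x0 := by simp [tconj]

lemma tconj_shift (a b : ℕ) :
    tconj x0 x1 (a + b) = x1 ^ a * tconj x0 x1 b * (x1 ^ a)⁻¹ := by
  simp only [tconj, pow_add]; group

lemma tconj_succ (a : ℕ) : tconj x0 x1 (a + 1) = x1 * tconj x0 x1 a * x1⁻¹ := by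
  have h := tconj_shift x0 x1 1 a
  rw [Nat.add_comm 1 a] at h
  simpa using h

lemma tchain_shift (a k : ℕ) :
    x1 * chainProd (tconj x0 x1) a k * x1⁻¹ = chainProd (tconj x0 x1) (a+1) k := by
  induction k generalizing a with
  | zero => simp
  | succ k ih =>
      calc x1 * chainProd (tconj x0 x1) a (k+1) * x1⁻¹
          = (x1 * tconj x0 x1 a * x1⁻¹) * (x1 * chainProd (tconj x0 x1) (a+1) k * x1⁻¹) := by
            rw [chainProd_succ]; group
        _ = chainProd (tconj x0 x1) (a+1) (k+1) := by
            rw [ih (a+1), ← tconj_succ, chainProd_succ]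

lemma tchain_pow (k : ℕ) :
    (x1 * x0) ^ k = chainProd (tconj x0 x1) 1 k * x1 ^ k := by
  induction k with
  | zero => simp
  | succ k ih =>
      have h : tconj x0 x1 (k+1) * x1 ^ (k+1) = x1 ^ (k+1) * x0 := by
        simp only [tconj]; group
      have hidx : (1 : ℕ) + k = k + 1 := by omega
      calc (x1 * x0) ^ (k+1) = (x1 * x0) ^ k * (x1 * x0) := pow_succ _ _
        _ = chainProd (tconj x0 x1) 1 k * x1 ^ k * (x1 * x0) := by rw [ih]
        _ = chainProd (tconj x0 x1) 1 k * (x1 ^ (k+1) * x0) := by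
            rw [mul_assoc]; congr 1; rw [← mul_assoc, ← pow_succ]
        _ = chainProd (tconj x0 x1) 1 k * (tconj x0 x1 (k+1) * x1 ^ (k+1)) := by rw [h]
        _ = chainProd (tconj x0 x1) 1 (k+1) * x1 ^ (k+1) := by
            rw [chainProd_succ', hidx, mul_assoc]

variable (hn : 3 ≤ n)
variable (hr2 : x1 ^ n = (x1 * x0) ^ (n - 1))

include hn hr2 in
lemma tdelta_one : chainProd (tconj x0 x1) 1 (n-1) = x1 := by
  have h1 : x1 ^ n = x1 * x1 ^ (n-1) := by
    rw [← pow_succ']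
    congr 1
    omega
  have h2 := hr2
  rw [tchain_pow, h1] at h2
  exact (mul_right_cancel h2).symm

include hn hr2 in
lemma tdelta_all : ∀ a, chainProd (tconj x0 x1) a (n-1) = x1 := by
  have h1 := tdelta_one x0 x1 n hn hr2
  intro a
  induction a with
  | zero =>
      have h := tchain_shift x0 x1 0 (n-1)
      rw [h1] at h
      calc chainProd (tconj x0 x1) 0 (n-1)
          = x1⁻¹ * (x1 * chainProd (tconj x0 x1) 0 (n-1) * x1⁻¹) * x1 := by group
        _ = x1⁻¹ * x1 * x1 := by rw [h]
        _ = x1 := by group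
  | succ a ih =>
      rw [← tchain_shift x0 x1 a (n-1), ih]
      group

include hn hr2 in
lemma tper (a : ℕ) : tconj x0 x1 (a + n) = tconj x0 x1 a := by
  set t := tconj x0 x1 with ht
  set W := chainProd t (a+1) (n-2) with hW
  have e1 : x1 = t a * W := by
    have h := tdelta_all x0 x1 n hn hr2 a
    rw [show n - 1 = (n-2)+1 by omega, chainProd_succ] at h
    exact h.symm
  have e2 : x1 = W * t (a + (n-1)) := by
    have h := tdelta_all x0 x1 n hn hr2 (a+1)
    rw [show n - 1 = (n-2)+1 by omega, chainProd_succ',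
      show a + 1 + (n-2) = a + (n-1) by omega] at h
    exact h.symm
  have e3 : t (a + n) = x1 * t (a + (n-1)) * x1⁻¹ := by
    rw [show a + n = (a + (n-1)) + 1 by omega]
    exact tconj_succ x0 x1 (a + (n-1))
  have e4 : t (a + (n-1)) = W⁻¹ * x1 := by rw [e2]; group
  rw [e3, e4, e1]
  group

include hn hr2 in
lemma tcomm_shift (a i : ℕ) (h : x0 * tconj x0 x1 i = tconj x0 x1 i * x0) :
    tconj x0 x1 a * tconj x0 x1 (a+i) = tconj x0 x1 (a+i) * tconj x0 x1 a := by
  rw [tconj_shift x0 x1 a i]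
  have hta : tconj x0 x1 a = x1 ^ a * x0 * (x1 ^ a)⁻¹ := rfl
  rw [hta]
  calc x1 ^ a * x0 * (x1 ^ a)⁻¹ * (x1 ^ a * tconj x0 x1 i * (x1 ^ a)⁻¹)
      = x1 ^ a * (x0 * tconj x0 x1 i) * (x1 ^ a)⁻¹ := by group
    _ = x1 ^ a * (tconj x0 x1 i * x0) * (x1 ^ a)⁻¹ := by rw [h]
    _ = x1 ^ a * tconj x0 x1 i * (x1 ^ a)⁻¹ * (x1 ^ a * x0 * (x1 ^ a)⁻¹) := by group

variable (hr1 : ∀ i : ℕ, 2 ≤ i → i ≤ n / 2 → x0 * tconj x0 x1 i = tconj x0 x1 i * x0)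

include hn hr1 hr2 in
lemma tcomm_all (a d : ℕ) (h2 : 2 ≤ d) (hd : d ≤ n - 2) :
    tconj x0 x1 a * tconj x0 x1 (a+d) = tconj x0 x1 (a+d) * tconj x0 x1 a := by
  rcases le_or_gt d (n / 2) with hle | hgt
  · exact tcomm_shift x0 x1 n hn hr2 a d (hr1 d h2 hle)
  · have key := tcomm_shift x0 x1 n hn hr2 (a + d) (n - d)
      (hr1 (n - d) (by omega) (by omega))
    rw [show a + d + (n - d) = a + n by omega, tper x0 x1 n hn hr2 a] at key
    exact key.symm

include hn hr1 hr2 in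
lemma tbraid (a : ℕ) :
    tconj x0 x1 a * tconj x0 x1 (a+1) * tconj x0 x1 a
      = tconj x0 x1 (a+1) * tconj x0 x1 a * tconj x0 x1 (a+1) := by
  set t := tconj x0 x1 with ht
  set V := chainProd t (a+2) (n-3) with hV
  have hVa : t a * V = V * t a := by
    rw [hV]
    refine commute_chainProd fun j hj1 hj2 => ?_
    have hj : j = a + (j - a) := by omega
    rw [hj]
    exact tcomm_all x0 x1 n hn hr2 hr1 a (j - a) (by omega) (by omega)
  have hx1 : x1 = t a * (t (a+1) * V) := by
    have h := tdelta_all x0 x1 n hn hr2 a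
    rw [show n - 1 = ((n-3)+1)+1 by omega, chainProd_succ, chainProd_succ] at h
    rw [← h]
  have hc : t (a+1) = x1 * t a * x1⁻¹ := tconj_succ x0 x1 a
  have key0 : t (a+1) * x1 = x1 * t a := by rw [hc]; group
  have key : t (a+1) * (t a * (t (a+1) * V)) = t a * (t (a+1) * V) * t a := by
    rw [← hx1]; exact key0
  have key2 : t (a+1) * t a * t (a+1) * V = t a * t (a+1) * t a * V := by
    calc t (a+1) * t a * t (a+1) * V = t (a+1) * (t a * (t (a+1) * V)) := by group
      _ = t a * (t (a+1) * V) * t a := key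
      _ = t a * t (a+1) * (V * t a) := by group
      _ = t a * t (a+1) * (t a * V) := by rw [← hVa]
      _ = t a * t (a+1) * t a * V := by group
  exact (mul_right_cancel key2).symm

end Two
section Assembly

lemma rel_eq_one {α : Type*} {rels : Set (FreeGroup α)} {w : FreeGroup α} (hw : w ∈ rels) :
    PresentedGroup.mk rels w = 1 :=
  (QuotientGroup.eq_one_iff w).mpr (Subgroup.subset_normalClosure hw)

lemma mk_of {α : Type*} (rels : Set (FreeGroup α)) (x : α) :
    PresentedGroup.mk rels (FreeGroup.of x) = PresentedGroup.of x := rfl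

variable (n : ℕ)

/-- the generator `σ_{i+1}` of the type-`D_n` presented group, as a function of `i : ℕ`. -/
def sG (i : ℕ) : PresentedGroup {r | IsDRel n r} :=
  if h : i < n - 1 then PresentedGroup.of (Sum.inl ⟨i, h⟩) else 1

/-- the generator `ρ` of the type-`D_n` presented group. -/
def ρG : PresentedGroup {r | IsDRel n r} := PresentedGroup.of (Sum.inr ())

lemma hcommG (i j : ℕ) (hij : i + 2 ≤ j) (hj : j ≤ n - 2) :
    sG n i * sG n j = sG n j * sG n i := by
  have hi' : i < n - 1 := by omega
  have hj' : j < n - 1 := by omega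
  have h := rel_eq_one (rels := {r | IsDRel n r})
    (IsDRel.comm_ss ⟨i, hi'⟩ ⟨j, hj'⟩ (by simpa using (by omega : i + 1 < j)))
  simp only [map_mul, map_inv, mk_of] at h
  rw [mul_inv_eq_one] at h
  simp only [sG]
  rw [dif_pos hi', dif_pos hj']
  exact h

lemma hbraidG (i : ℕ) (hi : i + 1 ≤ n - 2) :
    sG n i * sG n (i+1) * sG n i = sG n (i+1) * sG n i * sG n (i+1) := by
  have hi1 : i + 1 < n - 1 := by omega
  have hi' : i < n - 1 := by omega
  have h := rel_eq_one (rels := {r | IsDRel n r}) (IsDRel.braid_s i hi1)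
  simp only [map_mul, map_inv, mk_of] at h
  rw [mul_inv_eq_one] at h
  simp only [sG]
  rw [dif_pos hi', dif_pos hi1]
  exact h

lemma hρcommG (hn : 3 ≤ n) (i : ℕ) (hi : i ≤ n - 2) (hi1 : i ≠ 1) :
    ρG n * sG n i = sG n i * ρG n := by
  have hi' : i < n - 1 := by omega
  have h := rel_eq_one (rels := {r | IsDRel n r})
    (IsDRel.comm_rho ⟨i, hi'⟩ (by simpa using hi1))
  simp only [map_mul, map_inv, mk_of] at h
  rw [mul_inv_eq_one] at h
  simp only [sG, ρG]
  rw [dif_pos hi']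
  exact h

lemma hρbraidG (hn : 3 ≤ n) :
    ρG n * sG n 1 * ρG n = sG n 1 * ρG n * sG n 1 := by
  have h1 : 1 < n - 1 := by omega
  have h := rel_eq_one (rels := {r | IsDRel n r}) (IsDRel.braid_rho h1)
  simp only [map_mul, map_inv, mk_of] at h
  rw [mul_inv_eq_one] at h
  simp only [sG, ρG]
  rw [dif_pos h1]
  exact h

/-- `δ = σ₁σ₂⋯σ_{n-1}` in the type-`D_n` presented group. -/
def δG : PresentedGroup {r | IsDRel n r} := chainProd (sG n) 0 (n-1)

variable (hn : 3 ≤ n)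

include hn in
lemma deltaG_pow_mul {k : ℕ} (hk : k ≤ n - 2) :
    δG n ^ k * sG n 0 = sG n k * δG n ^ k := by
  have key := delta_pow_mul (sG n) (n-2) (fun i j h1 h2 => hcommG n i j h1 h2)
    (fun i h1 => hbraidG n i h1) hk
  have e1 : chainProd (sG n) 0 (n-1) = chainProd (sG n) 0 ((n-2)+1) :=
    congrArg (chainProd (sG n) 0) (by omega)
  rw [δG, e1]
  exact key

include hn in
lemma conjG {k : ℕ} (hk : k ≤ n - 2) :
    δG n ^ k * sG n 0 * (δG n ^ k)⁻¹ = sG n k := by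
  rw [deltaG_pow_mul n hn hk]; group

include hn in
lemma deltaG_main : (δG n * sG n 0) ^ (n-1) = δG n ^ n := by
  have key := delta_main (sG n) (n-2) (fun i j ha hb => hcommG n i j ha hb)
    (fun i h1 => hbraidG n i h1)
  have e1 : chainProd (sG n) 0 (n-1) = chainProd (sG n) 0 ((n-2)+1) :=
    congrArg (chainProd (sG n) 0) (by omega)
  have e2 : ∀ x : PresentedGroup {r | IsDRel n r}, x ^ (n-1) = x ^ ((n-2)+1) :=
    fun x => congrArg (x ^ ·) (by omega)
  have e3 : ∀ x : PresentedGroup {r | IsDRel n r}, x ^ n = x ^ ((n-2)+2) :=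
    fun x => congrArg (x ^ ·) (by omega)
  rw [δG, e1, e2, e3]
  exact key

-- H-side relation extraction
lemma hr1H (i : ℕ) (h1 : 2 ≤ i) (h2 : i ≤ n / 2) :
    (PresentedGroup.of 0 : PresentedGroup {r | IsDThreeRel n r}) *
      tconj (PresentedGroup.of 0) (PresentedGroup.of 1) i
      = tconj (PresentedGroup.of 0) (PresentedGroup.of 1) i * PresentedGroup.of 0 := by
  have h := rel_eq_one (rels := {r | IsDThreeRel n r}) (IsDThreeRel.r₁ i h1 h2)
  simp only [map_mul, map_inv, map_pow, mk_of] at h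
  rw [mul_inv_eq_one] at h
  simp only [tconj]
  calc (PresentedGroup.of 0 : PresentedGroup {r | IsDThreeRel n r}) *
        (PresentedGroup.of 1 ^ i * PresentedGroup.of 0 * (PresentedGroup.of 1 ^ i)⁻¹)
      = PresentedGroup.of 0 * PresentedGroup.of 1 ^ i * PresentedGroup.of 0 *
        (PresentedGroup.of 1 ^ i)⁻¹ := by group
    _ = _ := h

lemma hr2H : (PresentedGroup.of 1 : PresentedGroup {r | IsDThreeRel n r}) ^ n
    = (PresentedGroup.of 1 * PresentedGroup.of 0) ^ (n-1) := by
  have h := rel_eq_one (rels := {r | IsDThreeRel n r}) (IsDThreeRel.r₂ (n := n))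
  simp only [map_mul, map_inv, map_pow, mk_of] at h
  rwa [mul_inv_eq_one] at h

lemma hρcommH (i : ℕ) (h : i = 0 ∨ (2 ≤ i ∧ i ≤ n - 2)) :
    (PresentedGroup.of 2 : PresentedGroup {r | IsDThreeRel n r}) *
      tconj (PresentedGroup.of 0) (PresentedGroup.of 1) i
      = tconj (PresentedGroup.of 0) (PresentedGroup.of 1) i * PresentedGroup.of 2 := by
  have h := rel_eq_one (rels := {r | IsDThreeRel n r}) (IsDThreeRel.r₃ i h)
  simp only [map_mul, map_inv, map_pow, mk_of] at h
  rw [mul_inv_eq_one] at h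
  simpa only [tconj] using h

lemma hρbraidH :
    (PresentedGroup.of 2 : PresentedGroup {r | IsDThreeRel n r}) *
      tconj (PresentedGroup.of 0) (PresentedGroup.of 1) 1 * PresentedGroup.of 2
      = tconj (PresentedGroup.of 0) (PresentedGroup.of 1) 1 * PresentedGroup.of 2 *
        tconj (PresentedGroup.of 0) (PresentedGroup.of 1) 1 := by
  have h := rel_eq_one (rels := {r | IsDThreeRel n r}) (IsDThreeRel.r₄ (n := n))
  simp only [map_mul, map_inv, map_pow, mk_of] at h
  rw [mul_inv_eq_one] at h
  simpa only [tconj, pow_one] using h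

end Assembly
section Homs
variable (n : ℕ)

/-- images of the `D_n` Artin generators in the three-generator group -/
def fφ : Fin (n-1) ⊕ Unit → PresentedGroup {r | IsDThreeRel n r}
  | .inl i => tconj (PresentedGroup.of 0) (PresentedGroup.of 1) (i : ℕ)
  | .inr _ => PresentedGroup.of 2

@[simp] lemma fφ_inl (i : Fin (n-1)) :
    fφ n (Sum.inl i) = tconj (PresentedGroup.of 0) (PresentedGroup.of 1) (i : ℕ) := rfl

@[simp] lemma fφ_inr (u : Unit) : fφ n (Sum.inr u) = PresentedGroup.of 2 := rfl

/-- images of the three generators in the type-`D_n` Artin presented group -/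
def fψ : Fin 3 → PresentedGroup {r | IsDRel n r}
  | 0 => sG n 0
  | 1 => δG n
  | 2 => ρG n

@[simp] lemma fψ_zero : fψ n 0 = sG n 0 := rfl
@[simp] lemma fψ_one : fψ n 1 = δG n := rfl
@[simp] lemma fψ_two : fψ n 2 = ρG n := rfl

variable (hn : 3 ≤ n)

include hn in
lemma hφrel : ∀ r ∈ {r | IsDRel n r}, FreeGroup.lift (fφ n) r = 1 := by
  have hr1 := fun i h1 h2 => hr1H n i h1 h2
  have hr2 := hr2H n
  intro r hr
  induction hr with
  | comm_ss i j hij =>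
      simp only [map_mul, map_inv, FreeGroup.lift_apply_of, fφ_inl]
      rw [mul_inv_eq_one]
      have hd := tcomm_all (PresentedGroup.of 0) (PresentedGroup.of 1) n hn hr2 hr1
        (i : ℕ) ((j : ℕ) - (i : ℕ)) (by omega) (by have := j.isLt; omega)
      rwa [show (i : ℕ) + ((j : ℕ) - (i : ℕ)) = (j : ℕ) by omega] at hd
  | braid_s i h =>
      simp only [map_mul, map_inv, FreeGroup.lift_apply_of, fφ_inl]
      rw [mul_inv_eq_one]
      exact tbraid (PresentedGroup.of 0) (PresentedGroup.of 1) n hn hr2 hr1 i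
  | comm_rho i h =>
      simp only [map_mul, map_inv, FreeGroup.lift_apply_of, fφ_inl, fφ_inr]
      rw [mul_inv_eq_one]
      exact hρcommH n (i : ℕ) (by have := i.isLt; omega)
  | braid_rho h =>
      simp only [map_mul, map_inv, FreeGroup.lift_apply_of, fφ_inl, fφ_inr]
      rw [mul_inv_eq_one]
      exact hρbraidH n

include hn in
lemma hψrel : ∀ r ∈ {r | IsDThreeRel n r}, FreeGroup.lift (fψ n) r = 1 := by
  intro r hr
  induction hr with
  | r₁ i h1 h2 =>
      simp only [map_mul, map_inv, map_pow, FreeGroup.lift_apply_of, fψ_zero, fψ_one]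
      rw [mul_inv_eq_one]
      have hc := conjG n hn (k := i) (by omega)
      have hcm := hcommG n 0 i (by omega) (by omega)
      calc sG n 0 * δG n ^ i * sG n 0 * (δG n ^ i)⁻¹
          = sG n 0 * (δG n ^ i * sG n 0 * (δG n ^ i)⁻¹) := by group
        _ = sG n 0 * sG n i := by rw [hc]
        _ = sG n i * sG n 0 := hcm
        _ = δG n ^ i * sG n 0 * (δG n ^ i)⁻¹ * sG n 0 := by rw [hc]
  | r₂ =>
      simp only [map_mul, map_inv, map_pow, FreeGroup.lift_apply_of, fψ_zero, fψ_one]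
      rw [mul_inv_eq_one]
      exact (deltaG_main n hn).symm
  | r₃ i h =>
      simp only [map_mul, map_inv, map_pow, FreeGroup.lift_apply_of, fψ_zero, fψ_one, fψ_two]
      rw [mul_inv_eq_one]
      rw [conjG n hn (k := i) (by omega)]
      exact hρcommG n hn i (by omega) (by omega)
  | r₄ =>
      simp only [map_mul, map_inv, map_pow, FreeGroup.lift_apply_of, fψ_zero, fψ_one, fψ_two]
      rw [mul_inv_eq_one]
      have hc := conjG n hn (k := 1) (by omega)
      rw [pow_one] at hc
      rw [hc]
      exact hρbraidG n hn

end Homs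
/-- The Artin–Brieskorn braid group of type `D_n` has a presentation with three
generators `σ₁, σ, ρ`, the isomorphism sending `σ₁ ↦ σ₁`, `σ ↦ σ₁σ₂⋯σ_{n-1}`, `ρ ↦ ρ`. -/
theorem three_generator_presentation_of_artin_D (n : ℕ) (hn : 3 ≤ n) :
    ∃ e : PresentedGroup {r | IsDThreeRel n r} ≃* PresentedGroup {r | IsDRel n r},
      e (.of 0) = PresentedGroup.of (Sum.inl ⟨0, by omega⟩) ∧
      e (.of 2) = PresentedGroup.of (Sum.inr ()) ∧
      e (.of 1) = (List.ofFn (fun i : Fin (n - 1) =>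
        (PresentedGroup.of (Sum.inl i) : PresentedGroup {r | IsDRel n r}))).prod := by
  set φ := PresentedGroup.toGroup (f := fφ n) (hφrel n hn) with hφdef
  set ψ := PresentedGroup.toGroup (f := fψ n) (hψrel n hn) with hψdef
  have h0n : (0 : ℕ) < n - 1 := by omega
  have hφsG : ∀ j : ℕ, j < n - 1 →
      φ (sG n j) = tconj (PresentedGroup.of 0) (PresentedGroup.of 1) j := by
    intro j hj
    simp only [sG]
    rw [dif_pos hj, hφdef, PresentedGroup.toGroup.of]
    rfl
  have hφψ : φ.comp ψ = MonoidHom.id _ := by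
    apply PresentedGroup.ext
    intro x
    fin_cases x
    · show φ (ψ (PresentedGroup.of 0)) = PresentedGroup.of 0
      rw [hψdef, PresentedGroup.toGroup.of, fψ_zero, hφsG 0 h0n, tconj_zero]
    · show φ (ψ (PresentedGroup.of 1)) = PresentedGroup.of 1
      rw [hψdef, PresentedGroup.toGroup.of, fψ_one, δG, map_chainProd]
      rw [chainProd_congr (s' := tconj (PresentedGroup.of 0) (PresentedGroup.of 1))
        (fun j h1 h2 => hφsG j (by omega))]
      exact tdelta_all (PresentedGroup.of 0) (PresentedGroup.of 1) n hn (hr2H n) 0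
    · show φ (ψ (PresentedGroup.of 2)) = PresentedGroup.of 2
      rw [hψdef, PresentedGroup.toGroup.of, fψ_two, ρG, hφdef, PresentedGroup.toGroup.of,
        fφ_inr]
  have hψφ : ψ.comp φ = MonoidHom.id _ := by
    apply PresentedGroup.ext
    intro x
    rcases x with i | u
    · show ψ (φ (PresentedGroup.of (Sum.inl i))) = PresentedGroup.of (Sum.inl i)
      rw [hφdef, PresentedGroup.toGroup.of, fφ_inl]
      have hexp : ψ (tconj (PresentedGroup.of 0) (PresentedGroup.of 1) (i : ℕ))
          = δG n ^ (i : ℕ) * sG n 0 * (δG n ^ (i : ℕ))⁻¹ := by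
        simp only [tconj, map_mul, map_inv, map_pow, hψdef, PresentedGroup.toGroup.of,
          fψ_zero, fψ_one]
      rw [hexp, conjG n hn (by have := i.isLt; omega)]
      simp only [sG]
      rw [dif_pos i.isLt]
    · show ψ (φ (PresentedGroup.of (Sum.inr u))) = PresentedGroup.of (Sum.inr u)
      rw [hφdef, PresentedGroup.toGroup.of, fφ_inr, hψdef, PresentedGroup.toGroup.of,
        fψ_two, ρG]
  refine ⟨MonoidHom.toMulEquiv ψ φ hφψ hψφ, ?_, ?_, ?_⟩
  · show ψ (PresentedGroup.of 0) = _
    rw [hψdef, PresentedGroup.toGroup.of, fψ_zero]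
    simp only [sG]
    rw [dif_pos h0n]
  · show ψ (PresentedGroup.of 2) = _
    rw [hψdef, PresentedGroup.toGroup.of, fψ_two, ρG]
  · show ψ (PresentedGroup.of 1) = _
    rw [hψdef, PresentedGroup.toGroup.of, fψ_one, δG]
    exact chainProd_eq_ofFn (sG n) 0 (n-1) _ (fun j => by
      simp only [Nat.zero_add, sG]
      rw [dif_pos j.isLt])

end TypeD
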